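/- Let M = (ρ, E) be a matroid with ∅ ∈ Z(M) and E ∈ Z(M), and for Y ⊆ E let F^Y denote the meet, in the finite lattice (Z(M), ⊆), of all cyclic flats containing Y. Let X ⊆ E be a cyclic set of M. Then: (i) the collection of cyclic flats of the restriction M|X is Z(M|X) = {X ∩ F : F ∈ Z(M), F ⊆ F^X, and X ∩ F is a cyclic set of M}; (ii) for every Y ∈ Z(M|X), ρ(Y) = ρ(F^Y). -/
import Mathlib


/-- A matroid given by an integer-valued rank function on subsets of a finite ground set. -/
structure RankMatroid (α : Type) [DecidableEq α] where
  E : Finset α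
  rk : Finset α → ℤ
  rk_nonneg : ∀ X : Finset α, X ⊆ E → 0 ≤ rk X
  rk_le_card : ∀ X : Finset α, X ⊆ E → rk X ≤ X.card
  rk_mono : ∀ X Y : Finset α, X ⊆ Y → Y ⊆ E → rk X ≤ rk Y
  rk_submod : ∀ X Y : Finset α, X ⊆ E → Y ⊆ E → rk (X ∪ Y) + rk (X ∩ Y) ≤ rk X + rk Y

namespace RankMatroid

variable {α : Type} [DecidableEq α]

/-- The minimum distance `d_X` of the restriction to `X`:
`d_X = min {|Y| : Y ⊆ X, ρ(X \ Y) < ρ(X)}`. -/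
noncomputable def dist (M : RankMatroid α) (X : Finset α) : ℕ :=
  sInf {m : ℕ | ∃ Y : Finset α, Y ⊆ X ∧ Y.card = m ∧ M.rk (X \ Y) < M.rk X}

/-- Closure: `cl(X) = {y ∈ E : ρ(X ∪ {y}) = ρ(X)}`. -/
def cl (M : RankMatroid α) (X : Finset α) : Finset α :=
  M.E.filter fun y => M.rk (insert y X) = M.rk X

/-- `X` is cyclic if `ρ(X \ {x}) = ρ(X)` for every `x ∈ X`. -/
def Cyclic (M : RankMatroid α) (X : Finset α) : Prop :=
  ∀ x ∈ X, M.rk (X.erase x) = M.rk X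

/-- Cyclic core: `cyc(X) = {x ∈ X : ρ(X \ {x}) = ρ(X)}`. -/
def cyc (M : RankMatroid α) (X : Finset α) : Finset α :=
  X.filter fun x => M.rk (X.erase x) = M.rk X

/-- A cyclic flat is a set which is both cyclic and a flat. -/
def IsCyclicFlat (M : RankMatroid α) (X : Finset α) : Prop :=
  X ⊆ M.E ∧ M.Cyclic X ∧ M.cl X = X

/-- `Z(M)`: the collection of cyclic flats of `M`. -/
def Z (M : RankMatroid α) : Set (Finset α) := {X | M.IsCyclicFlat X}

/-- `M` is non-degenerate: every singleton has rank at least one and `d ≥ 2`. -/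
def NonDegenerate (M : RankMatroid α) : Prop :=
  (∀ x ∈ M.E, 1 ≤ M.rk {x}) ∧ 2 ≤ M.dist M.E

/-- `R` is a repair set for `x` with parameters `(r, δ)`. -/
def IsRepairSet (M : RankMatroid α) (r δ : ℤ) (x : α) (R : Finset α) : Prop :=
  R ⊆ M.E ∧ x ∈ R ∧ (R.card : ℤ) ≤ r + δ - 1 ∧ δ ≤ (M.dist R : ℤ)

/-- The collection of cyclic flats of the restriction `M|X`. -/
def ZIn (M : RankMatroid α) (X : Finset α) : Set (Finset α) :=
  {Y | Y ⊆ X ∧ M.Cyclic Y ∧ X.filter (fun z => M.rk (insert z Y) = M.rk Y) = Y}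

/-- `FX` is the meet, in the lattice `(Z(M), ⊆)`, of all cyclic flats containing `X`. -/
def IsMeetOfFlatsContaining (M : RankMatroid α) (X FX : Finset α) : Prop :=
  FX ∈ M.Z ∧ (∀ F ∈ M.Z, X ⊆ F → FX ⊆ F) ∧
    ∀ W ∈ M.Z, (∀ F ∈ M.Z, X ⊆ F → W ⊆ F) → W ⊆ FX

end RankMatroid

namespace RankMatroid

variable {α : Type} [DecidableEq α] (M : RankMatroid α)

lemma cl_subset_E (X : Finset α) : M.cl X ⊆ M.E := Finset.filter_subset _ _

lemma mem_cl_iff {X : Finset α} {y : α} :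
    y ∈ M.cl X ↔ y ∈ M.E ∧ M.rk (insert y X) = M.rk X := Finset.mem_filter

lemma subset_cl {X : Finset α} (hX : X ⊆ M.E) : X ⊆ M.cl X := by
  intro x hx
  exact (M.mem_cl_iff).2 ⟨hX hx, by rw [Finset.insert_eq_self.2 hx]⟩

lemma rk_union_cl {X S : Finset α} (hX : X ⊆ M.E) (hS : S ⊆ M.cl X) :
    M.rk (X ∪ S) = M.rk X := by
  induction S using Finset.induction with
  | empty => simp
  | @insert a S ha ih =>
    have haE : a ∈ M.E := ((M.mem_cl_iff).1 (hS (Finset.mem_insert_self a S))).1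
    have hra : M.rk (insert a X) = M.rk X :=
      ((M.mem_cl_iff).1 (hS (Finset.mem_insert_self a S))).2
    have hSX : S ⊆ M.cl X := fun s hs => hS (Finset.mem_insert_of_mem hs)
    have ih' := ih hSX
    have hXSE : X ∪ S ⊆ M.E := Finset.union_subset hX (hSX.trans (M.cl_subset_E X))
    have haXE : insert a X ⊆ M.E := Finset.insert_subset haE hX
    have hsub := M.rk_submod (X ∪ S) (insert a X) hXSE haXE
    have hun : (X ∪ S) ∪ insert a X = insert a (X ∪ S) := by
      ext z; simp only [Finset.mem_insert, Finset.mem_union]; tauto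
    have hint : X ⊆ (X ∪ S) ∩ insert a X := by
      intro z hz
      exact Finset.mem_inter.2 ⟨Finset.mem_union_left _ hz, Finset.mem_insert_of_mem hz⟩
    have hintE : (X ∪ S) ∩ insert a X ⊆ M.E :=
      (Finset.inter_subset_left).trans hXSE
    have h1 : M.rk X ≤ M.rk ((X ∪ S) ∩ insert a X) := M.rk_mono _ _ hint hintE
    have h2 : M.rk X ≤ M.rk (X ∪ insert a S) := by
      refine M.rk_mono _ _ Finset.subset_union_left ?_
      refine Finset.union_subset hX (Finset.insert_subset haE (hSX.trans (M.cl_subset_E X)))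
    have h3 : X ∪ insert a S = insert a (X ∪ S) := by
      ext z; simp only [Finset.mem_insert, Finset.mem_union]; tauto
    rw [hun] at hsub
    rw [h3] at h2 ⊢
    omega

lemma rk_cl {X : Finset α} (hX : X ⊆ M.E) : M.rk (M.cl X) = M.rk X := by
  have : X ∪ M.cl X = M.cl X := Finset.union_eq_right.2 (M.subset_cl hX)
  rw [← this]
  exact M.rk_union_cl hX (le_refl _)

lemma rk_between {S T : Finset α} (hS : S ⊆ M.E) (h1 : S ⊆ T) (h2 : T ⊆ M.cl S) :
    M.rk T = M.rk S := by
  have hTE : T ⊆ M.E := h2.trans (M.cl_subset_E S)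
  have := M.rk_mono S T h1 hTE
  have := M.rk_mono T (M.cl S) h2 (M.cl_subset_E S)
  have := M.rk_cl hS
  omega

lemma cl_mono {X Y : Finset α} (hXY : X ⊆ Y) (hY : Y ⊆ M.E) : M.cl X ⊆ M.cl Y := by
  intro y hy
  obtain ⟨hyE, hyr⟩ := (M.mem_cl_iff).1 hy
  refine (M.mem_cl_iff).2 ⟨hyE, ?_⟩
  have hXE : X ⊆ M.E := hXY.trans hY
  have haXE : insert y X ⊆ M.E := Finset.insert_subset hyE hXE
  have hsub := M.rk_submod Y (insert y X) hY haXE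
  have hun : Y ∪ insert y X = insert y Y := by
    ext z; simp only [Finset.mem_insert, Finset.mem_union]
    constructor
    · rintro (h | h | h)
      exacts [Or.inr h, Or.inl h, Or.inr (hXY h)]
    · rintro (h | h)
      exacts [Or.inr (Or.inl h), Or.inl h]
  have hint : X ⊆ Y ∩ insert y X := fun z hz =>
    Finset.mem_inter.2 ⟨hXY hz, Finset.mem_insert_of_mem hz⟩
  have h1 : M.rk X ≤ M.rk (Y ∩ insert y X) :=
    M.rk_mono _ _ hint ((Finset.inter_subset_left).trans hY)
  have h2 : M.rk Y ≤ M.rk (insert y Y) :=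
    M.rk_mono _ _ (Finset.subset_insert _ _) (Finset.insert_subset hyE hY)
  rw [hun, hyr] at hsub
  omega

lemma cl_cl {X : Finset α} (hX : X ⊆ M.E) : M.cl (M.cl X) = M.cl X := by
  apply Finset.Subset.antisymm
  · intro y hy
    obtain ⟨hyE, hyr⟩ := (M.mem_cl_iff).1 hy
    refine (M.mem_cl_iff).2 ⟨hyE, ?_⟩
    have h1 : M.rk X ≤ M.rk (insert y X) :=
      M.rk_mono _ _ (Finset.subset_insert _ _) (Finset.insert_subset hyE hX)
    have h2 : M.rk (insert y X) ≤ M.rk (insert y (M.cl X)) :=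
      M.rk_mono _ _ (Finset.insert_subset_insert _ (M.subset_cl hX))
        (Finset.insert_subset hyE (M.cl_subset_E X))
    have := M.rk_cl hX
    omega
  · exact M.subset_cl (M.cl_subset_E X)

lemma cyclic_cl {X : Finset α} (hX : X ⊆ M.E) (hc : M.Cyclic X) : M.Cyclic (M.cl X) := by
  intro x hx
  set S := X.erase x with hSdef
  have hSE : S ⊆ M.E := (Finset.erase_subset _ _).trans hX
  have hSr : M.rk S = M.rk X := by
    by_cases hxX : x ∈ X
    · exact hc x hxX
    · rw [hSdef, Finset.erase_eq_of_notMem hxX]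
  have hXclS : X ⊆ M.cl S := by
    intro z hz
    refine (M.mem_cl_iff).2 ⟨hX hz, ?_⟩
    have h1 : insert z S ⊆ X := Finset.insert_subset hz (Finset.erase_subset _ _)
    have h2 : M.rk (insert z S) ≤ M.rk X := M.rk_mono _ _ h1 hX
    have h3 : M.rk S ≤ M.rk (insert z S) :=
      M.rk_mono _ _ (Finset.subset_insert _ _) (h1.trans hX)
    omega
  have hclcl : M.cl X ⊆ M.cl S := by
    have := M.cl_mono hXclS (M.cl_subset_E S)
    rwa [M.cl_cl hSE] at this
  have hSsub : S ⊆ (M.cl X).erase x := by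
    intro z hz
    exact Finset.mem_erase.2 ⟨(Finset.mem_erase.1 hz).1, M.subset_cl hX ((Finset.erase_subset _ _) hz)⟩
  have h := M.rk_between hSE hSsub (((Finset.erase_subset _ _).trans hclcl))
  rw [h, hSr, M.rk_cl hX]

lemma cl_mem_Z {X : Finset α} (hX : X ⊆ M.E) (hc : M.Cyclic X) : M.cl X ∈ M.Z :=
  ⟨M.cl_subset_E X, M.cyclic_cl hX hc, M.cl_cl hX⟩

lemma meet_eq_cl {X FX : Finset α} (hX : X ⊆ M.E) (hc : M.Cyclic X)
    (hFX : M.IsMeetOfFlatsContaining X FX) : FX = M.cl X := by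
  apply Finset.Subset.antisymm
  · exact hFX.2.1 (M.cl X) (M.cl_mem_Z hX hc) (M.subset_cl hX)
  · refine hFX.2.2 (M.cl X) (M.cl_mem_Z hX hc) ?_
    intro F hF hXF
    have := M.cl_mono hXF hF.1
    rwa [hF.2.2] at this

lemma filter_eq_inter_cl {X Y : Finset α} (hX : X ⊆ M.E) :
    X.filter (fun z => M.rk (insert z Y) = M.rk Y) = X ∩ M.cl Y := by
  ext z
  simp only [Finset.mem_filter, Finset.mem_inter, mem_cl_iff]
  exact ⟨fun ⟨h1, h2⟩ => ⟨h1, hX h1, h2⟩, fun ⟨h1, _, h3⟩ => ⟨h1, h3⟩⟩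

end RankMatroid


/-- Cyclic flats of a restriction to a cyclic set `X`:
`Z(M|X) = {X ∩ F : F ∈ Z(M), F ⊆ F^X, X ∩ F cyclic}`, and every
`Y ∈ Z(M|X)` satisfies `ρ(Y) = ρ(F^Y)`. -/
theorem stmt8 {α : Type} [DecidableEq α] (M : RankMatroid α)
    (h0 : ∅ ∈ M.Z) (h1 : M.E ∈ M.Z)
    (X : Finset α) (hXE : X ⊆ M.E) (hXcyc : M.Cyclic X)
    (FX : Finset α) (hFX : M.IsMeetOfFlatsContaining X FX) :
    (M.ZIn X = {Y | ∃ F ∈ M.Z, F ⊆ FX ∧ Y = X ∩ F ∧ M.Cyclic (X ∩ F)}) ∧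
    (∀ Y ∈ M.ZIn X, ∀ FY : Finset α, M.IsMeetOfFlatsContaining Y FY →
      M.rk Y = M.rk FY) := by
  constructor
  · ext Y
    simp only [Set.mem_setOf_eq]
    constructor
    · rintro ⟨hYX, hYc, hfilt⟩
      have hYE : Y ⊆ M.E := hYX.trans hXE
      have hkey : X ∩ M.cl Y = Y := by rw [← M.filter_eq_inter_cl hXE]; exact hfilt
      refine ⟨M.cl Y, M.cl_mem_Z hYE hYc, ?_, hkey.symm, by rw [hkey]; exact hYc⟩
      rw [M.meet_eq_cl hXE hXcyc hFX]
      exact M.cl_mono hYX hXE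
    · rintro ⟨F, hF, hFFX, hYeq, hYc⟩
      subst hYeq
      have hXFE : X ∩ F ⊆ M.E := (Finset.inter_subset_left).trans hXE
      refine ⟨Finset.inter_subset_left, hYc, ?_⟩
      rw [M.filter_eq_inter_cl hXE]
      apply Finset.Subset.antisymm
      · intro z hz
        obtain ⟨hzX, hzcl⟩ := Finset.mem_inter.1 hz
        have hsub : M.cl (X ∩ F) ⊆ F := by
          have := M.cl_mono (Finset.inter_subset_right : X ∩ F ⊆ F) hF.1
          rwa [hF.2.2] at this
        exact Finset.mem_inter.2 ⟨hzX, hsub hzcl⟩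
      · intro z hz
        exact Finset.mem_inter.2 ⟨(Finset.mem_inter.1 hz).1, M.subset_cl hXFE hz⟩
  · rintro Y ⟨hYX, hYc, -⟩ FY hFY
    have hYE : Y ⊆ M.E := hYX.trans hXE
    rw [M.meet_eq_cl hYE hYc hFY, M.rk_cl hYE]
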